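/- Let v : Fin n → ℝ² be a closed polygon (indices mod n), with edge vectors e_k = v_{k+1} − v_k, edge midpoints m_k = (v_k + v_{k+1})/2, scaled normals rot(e_k) where rot(x, y) = (y, −x), and signed area A = (1/2) ∑_k ((v_k)_1 (v_{k+1})_2 − (v_{k+1})_1 (v_k)_2). Then for every point p ∈ ℝ² and every vector u ∈ ℝ², ∑_k ⟪rot(e_k), u⟫ • (m_k − p) = A • u; equivalently, the dyadic sum ∑_k (m_k − p) ⊗ rot(e_k) equals A times the identity matrix. -/

import Mathlib

/-!
Each edge term is exact up to its shoelace contribution: with the quadratic potential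
`Φ x = ⟪rot x, u⟫ • (x / 2 - p)` one has
`⟪rot (b - a), u⟫ • ((a + b) / 2 - p) = ((a₀ b₁ - b₀ a₁) / 2) • u + (Φ b - Φ a)`,
which reduces to the planar "BAC-CAB" rule `⟪rot b, u⟫ • a - ⟪rot a, u⟫ • b = (a₀ b₁ - b₀ a₁) • u`.
Around a closed polygon the differences of `Φ` telescope, leaving the shoelace area times `u`.
-/

open scoped RealInnerProductSpace BigOperators

/-- The clockwise quarter-turn `rot (x, y) = (y, -x)` in the plane. -/
noncomputable def rot (w : EuclideanSpace ℝ (Fin 2)) : EuclideanSpace ℝ (Fin 2) :=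
  (WithLp.equiv 2 (Fin 2 → ℝ)).symm ![w 1, -(w 0)]

theorem Fintype.sum_sub_comp_add_right_eq_zero {G M : Type*} [AddGroup G] [Fintype G]
    [AddCommGroup M] (f : G → M) (g : G) : ∑ x, (f (x + g) - f x) = 0 := by
  rw [Finset.sum_sub_distrib, sub_eq_zero]
  exact Equiv.sum_comp (Equiv.addRight g) f

section Rot

variable (a b u w : EuclideanSpace ℝ (Fin 2))

theorem rot_apply_zero : rot w 0 = w 1 := rfl

theorem rot_apply_one : rot w 1 = -w 0 := rfl

theorem rot_sub : rot (a - b) = rot a - rot b := by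
  ext i
  fin_cases i <;>
    simp only [Fin.zero_eta, Fin.mk_one, PiLp.sub_apply, rot_apply_zero, rot_apply_one]
  ring

theorem inner_rot : ⟪rot w, u⟫ = w 1 * u 0 - w 0 * u 1 := by
  rw [PiLp.inner_apply, Fin.sum_univ_two, rot_apply_zero, rot_apply_one]
  simp only [RCLike.inner_apply, conj_trivial]
  ring

theorem inner_rot_smul_sub_inner_rot_smul :
    ⟪rot b, u⟫ • a - ⟪rot a, u⟫ • b = (a 0 * b 1 - b 0 * a 1) • u := by
  ext i
  fin_cases i <;>
    simp only [Fin.zero_eta, Fin.mk_one, inner_rot, PiLp.sub_apply, PiLp.smul_apply, smul_eq_mul] <;>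
    ring

theorem inner_rot_sub_smul_midpoint_sub (p : EuclideanSpace ℝ (Fin 2)) :
    ⟪rot (b - a), u⟫ • ((2 : ℝ)⁻¹ • (a + b) - p)
      = ((1 / 2 : ℝ) * (a 0 * b 1 - b 0 * a 1)) • u
        + (⟪rot b, u⟫ • ((2 : ℝ)⁻¹ • b - p) - ⟪rot a, u⟫ • ((2 : ℝ)⁻¹ • a - p)) := by
  rw [mul_smul, ← inner_rot_smul_sub_inner_rot_smul, rot_sub, inner_sub_left]
  module

end Rot

/-- For a closed polygon `v : Fin n → ℝ²` (indices mod `n`) with edge vectors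
`e k = v (k+1) - v k`, edge midpoints `m k = (v k + v (k+1))/2`, scaled outward
normals `rot (e k)` and shoelace signed area `A`, for every point `p` and every
vector `u` one has `∑ k ⟪rot (e k), u⟫ • (m k - p) = A • u`, i.e. the dyadic sum
`∑ k (m k - p) ⊗ rot (e k)` of the Modified Green-Gauss scheme equals `A` times
the identity. -/
theorem mgg_dyadic_sum_eq_area_smul_id (n : ℕ) [NeZero n]
    (v : Fin n → EuclideanSpace ℝ (Fin 2))
    (p u : EuclideanSpace ℝ (Fin 2)) :
    ∑ k : Fin n, ⟪rot (v (k + 1) - v k), u⟫ • (((2 : ℝ)⁻¹ • (v k + v (k + 1))) - p)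
      = ((1 / 2 : ℝ) * ∑ k : Fin n,
          (v k 0 * v (k + 1) 1 - v (k + 1) 0 * v k 1)) • u := by
  simp_rw [inner_rot_sub_smul_midpoint_sub, Finset.sum_add_distrib,
    Fintype.sum_sub_comp_add_right_eq_zero (fun x => ⟪rot (v x), u⟫ • ((2 : ℝ)⁻¹ • v x - p)),
    add_zero, Finset.mul_sum, Finset.sum_smul]
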